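/- arXiv:2303.04461 — 2 statements merged into one kernel-verified Lean document; each statement's English description precedes it below -/
import Mathlib

section
/- Let A be an evolution algebra with natural basis B and let I be a maximal ideal of A. If e ∈ B \ I, then B = T(e) ∪ H_I, i.e., every basis element e_i either lies in the tree T(e) of e in the associated graph or satisfies e_i² ∈ I. -/
/-!
Let `T` be the set of vertices reachable from `e`. It is hereditary, so the span `I_T` of the
basis vectors it indexes is an ideal, and `I + I_T` is an ideal strictly larger than `I` (it
contains `e`), hence everything. For `eᵢ ∉ T` write `eᵢ = y + z` with `y ∈ I`, `z ∈ I_T`; since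
`z` has no `eᵢ`-component, `eᵢ z = 0`, so `eᵢ² = eᵢ y ∈ I`.
-/

variable {K ι A : Type*}

section Defs
variable [Field K] [NonUnitalNonAssocCommRing A] [Module K A]
  [SMulCommClass K A A] [IsScalarTower K A A]

/-- A natural basis: distinct basis elements multiply to zero. -/
def IsNaturalBasis (b : Module.Basis ι K A) : Prop := ∀ i j : ι, i ≠ j → b i * b j = 0

/-- Edge i → j in the associated graph: the j-th coordinate of (b i)² is nonzero. -/
def EvolEdge (b : Module.Basis ι K A) (i j : ι) : Prop := b.repr (b i * b i) j ≠ 0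

/-- Hereditary subset of vertices: closed under edges (hence under reachability). -/
def EvolHereditary (b : Module.Basis ι K A) (H : Set ι) : Prop :=
  ∀ i ∈ H, ∀ j, EvolEdge b i j → j ∈ H

/-- Saturated subset: a regular vertex all of whose edge-targets lie in H belongs to H. -/
def EvolSaturated (b : Module.Basis ι K A) (H : Set ι) : Prop :=
  ∀ i : ι, b i * b i ≠ 0 → (∀ j, EvolEdge b i j → j ∈ H) → i ∈ H

/-- Ideal of a (nonunital, nonassociative, commutative) algebra: a submodule absorbing
multiplication. -/
def IsEvolIdeal (I : Submodule K A) : Prop := ∀ a : A, ∀ x ∈ I, a * x ∈ I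

/-- I_H, the span of the basis elements indexed by H. -/
def idealOf (b : Module.Basis ι K A) (H : Set ι) : Submodule K A := Submodule.span K (b '' H)

/-- H_I = {e ∈ B : e² ∈ I}. -/
def hSet (b : Module.Basis ι K A) (I : Submodule K A) : Set ι := {i | b i * b i ∈ I}

/-- Maximal ideal. -/
def IsMaxIdeal (I : Submodule K A) : Prop :=
  IsEvolIdeal I ∧ I ≠ ⊤ ∧
    ∀ J : Submodule K A, IsEvolIdeal J → I ≤ J → J = I ∨ J = ⊤

/-- Absorption property of an ideal. -/
def Absorption (I : Submodule K A) : Prop := ∀ x : A, (∀ a : A, x * a ∈ I) → x ∈ I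

end Defs

/-- A², the span of all products. -/
def sqIdeal (K A : Type*) [Field K] [NonUnitalNonAssocCommRing A] [Module K A] :
    Submodule K A :=
  Submodule.span K {x : A | ∃ a c : A, x = a * c}

variable [Field K] [NonUnitalNonAssocCommRing A] [Module K A]
  [SMulCommClass K A A] [IsScalarTower K A A]

section

omit [SMulCommClass K A A] [IsScalarTower K A A]

lemma IsEvolIdeal.sup {I J : Submodule K A} (hI : IsEvolIdeal I) (hJ : IsEvolIdeal J) :
    IsEvolIdeal (I ⊔ J) := by
  intro a x hx
  obtain ⟨y, hy, z, hz, rfl⟩ := Submodule.mem_sup.mp hx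
  rw [mul_add]
  exact Submodule.add_mem_sup (hI a y hy) (hJ a z hz)

lemma evolHereditary_reachable (b : Module.Basis ι K A) (k : ι) :
    EvolHereditary b {j | Relation.ReflTransGen (EvolEdge b) k j} :=
  fun _ hi _ hij => Relation.ReflTransGen.tail hi hij

lemma EvolHereditary.mul_self_mem_idealOf {b : Module.Basis ι K A} {H : Set ι}
    (hH : EvolHereditary b H) {j : ι} (hj : j ∈ H) : b j * b j ∈ idealOf b H :=
  (b.mem_span_image).mpr fun _ hl => hH j hj _ (Finsupp.mem_support_iff.mp hl)

end

section

omit [SMulCommClass K A A]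

lemma IsNaturalBasis.mul_basis {b : Module.Basis ι K A} (hb : IsNaturalBasis b) (a : A)
    (j : ι) : a * b j = b.repr a j • (b j * b j) := by
  conv_lhs => rw [← b.linearCombination_repr a]
  rw [Finsupp.linearCombination_apply, Finsupp.sum_mul,
    Finsupp.sum_eq_single j (fun l _ hlj => by rw [smul_mul_assoc, hb l j hlj, smul_zero])
      (by simp), smul_mul_assoc]

lemma IsNaturalBasis.basis_mul_eq_zero {b : Module.Basis ι K A} (hb : IsNaturalBasis b)
    {z : A} {i : ι} (hz : b.repr z i = 0) : b i * z = 0 := by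
  rw [mul_comm, hb.mul_basis, hz, zero_smul]

lemma mem_hSet_of_basis_mem_sup_idealOf {b : Module.Basis ι K A} (hb : IsNaturalBasis b)
    {I : Submodule K A} (hI : IsEvolIdeal I) {H : Set ι} {i : ι} (hi : i ∉ H)
    (hbi : b i ∈ I ⊔ idealOf b H) : i ∈ hSet b I := by
  obtain ⟨y, hy, z, hz, hyz⟩ := Submodule.mem_sup.mp hbi
  have hzi : b.repr z i = 0 := by
    by_contra h
    exact hi ((b.mem_span_image).mp hz (Finsupp.mem_support_iff.mpr h))
  have hsq : b i * b i = b i * y := calc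
    b i * b i = b i * (y + z) := by rw [hyz]
    _ = b i * y := by rw [mul_add, hb.basis_mul_eq_zero hzi, add_zero]
  show b i * b i ∈ I
  rw [hsq]
  exact hI (b i) y hy

end

lemma isEvolIdeal_idealOf {b : Module.Basis ι K A} (hb : IsNaturalBasis b) {H : Set ι}
    (hH : EvolHereditary b H) : IsEvolIdeal (idealOf b H) := by
  intro a x hx
  induction hx using Submodule.span_induction with
  | mem w hw =>
    obtain ⟨j, hj, rfl⟩ := hw
    rw [hb.mul_basis]
    exact Submodule.smul_mem _ _ (hH.mul_self_mem_idealOf hj)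
  | zero => rw [mul_zero]; exact Submodule.zero_mem _
  | add u v _ _ hu hv => rw [mul_add]; exact Submodule.add_mem _ hu hv
  | smul c u _ hu => rw [mul_smul_comm]; exact Submodule.smul_mem _ _ hu

theorem stmt12 (b : Module.Basis ι K A) (hb : IsNaturalBasis b) (I : Submodule K A)
    (hI : IsMaxIdeal I) (k : ι) (hk : b k ∉ I) :
    ∀ i : ι, Relation.ReflTransGen (EvolEdge b) k i ∨ i ∈ hSet b I := by
  obtain ⟨hIideal, -, hImax⟩ := hI
  set T : Set ι := {j | Relation.ReflTransGen (EvolEdge b) k j}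
  have hT : EvolHereditary b T := evolHereditary_reachable b k
  have hkJ : b k ∈ I ⊔ idealOf b T :=
    Submodule.mem_sup_right (Submodule.subset_span ⟨k, Relation.ReflTransGen.refl, rfl⟩)
  have hJ : I ⊔ idealOf b T = ⊤ :=
    (hImax _ (hIideal.sup (isEvolIdeal_idealOf hb hT)) le_sup_left).resolve_left
      fun h => hk (h ▸ hkJ)
  intro i
  by_cases hi : i ∈ T
  · exact Or.inl hi
  · exact Or.inr (mem_hSet_of_basis_mem_sup_idealOf hb hIideal hi (hJ ▸ Submodule.mem_top))
end

section
/- Let A be an evolution algebra with natural basis B and I an ideal of A. The following are equivalent: (1) I has the absorption property; (2) H_I = I ∩ B; (3) I = I_{H_I}. -/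
/-!
For a natural basis, `x * e_i = x_i • e_i²`. Hence `x A ⊆ I` forces `e_i² ∈ I` for every `i` in
the support of `x`, i.e. `x ∈ I_{H_I}`; in particular `I ⊆ I_{H_I}`, and conversely every `e_i`
with `e_i² ∈ I` satisfies `e_i A ⊆ I`. So each of the three conditions amounts to `I_{H_I} ⊆ I`.
-/

variable {K ι A : Type*}

variable [Field K] [NonUnitalNonAssocCommRing A] [Module K A]
  [SMulCommClass K A A] [IsScalarTower K A A]

omit [SMulCommClass K A A] [IsScalarTower K A A] in
theorem idealOf_le_iff (b : Module.Basis ι K A) (H : Set ι) (I : Submodule K A) :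
    idealOf b H ≤ I ↔ ∀ i ∈ H, b i ∈ I := by
  rw [idealOf, Submodule.span_le, Set.image_subset_iff]
  rfl

namespace IsNaturalBasis

variable {b : Module.Basis ι K A} (hb : IsNaturalBasis b)
include hb
omit [SMulCommClass K A A]

theorem mul_basis_s17 (x : A) (j : ι) : x * b j = b.repr x j • (b j * b j) := by
  conv_lhs => rw [← b.linearCombination_repr x]
  rw [Finsupp.linearCombination_apply, Finsupp.sum, Finset.sum_mul,
    Finset.sum_eq_single j (fun i _ hij => by rw [smul_mul_assoc, hb i j hij, smul_zero])
      (fun hj => by rw [Finsupp.notMem_support_iff.mp hj, zero_smul, zero_mul]),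
    smul_mul_assoc]

theorem mem_idealOf_hSet_of_forall_mul_mem {I : Submodule K A} {x : A}
    (hx : ∀ a : A, x * a ∈ I) : x ∈ idealOf b (hSet b I) := by
  refine b.mem_span_image.mpr fun i hi => ?_
  have hxi : b.repr x i ≠ 0 := Finsupp.mem_support_iff.mp hi
  have h := hx (b i)
  rw [hb.mul_basis_s17] at h
  show b i * b i ∈ I
  simpa only [smul_smul, inv_mul_cancel₀ hxi, one_smul] using I.smul_mem (b.repr x i)⁻¹ h

theorem le_idealOf_hSet {I : Submodule K A} (hI : IsEvolIdeal I) :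
    I ≤ idealOf b (hSet b I) := fun x hx =>
  hb.mem_idealOf_hSet_of_forall_mul_mem fun a => mul_comm a x ▸ hI a x hx

theorem absorption_iff_idealOf_hSet_le (I : Submodule K A) :
    Absorption I ↔ idealOf b (hSet b I) ≤ I := by
  refine ⟨fun habs => (idealOf_le_iff b _ I).mpr fun i hi => habs _ fun a => ?_,
    fun hle x hx => hle (hb.mem_idealOf_hSet_of_forall_mul_mem hx)⟩
  rw [mul_comm, hb.mul_basis_s17]
  exact I.smul_mem _ hi

end IsNaturalBasis

theorem stmt17 (b : Module.Basis ι K A) (hb : IsNaturalBasis b) (I : Submodule K A)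
    (hI : IsEvolIdeal I) :
    (Absorption I ↔ hSet b I = {i : ι | b i ∈ I}) ∧
      (Absorption I ↔ I = idealOf b (hSet b I)) := by
  have hsq : {i : ι | b i ∈ I} ⊆ hSet b I := fun i hi => hI (b i) (b i) hi
  rw [hb.absorption_iff_idealOf_hSet_le, idealOf_le_iff]
  exact ⟨⟨fun h => Set.Subset.antisymm h hsq, fun h i hi => (h.le hi : b i ∈ I)⟩,
    ⟨fun h => le_antisymm (hb.le_idealOf_hSet hI) ((idealOf_le_iff b _ I).mpr h),
      fun h => (idealOf_le_iff b _ I).mp h.symm.le⟩⟩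
end
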